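/- arXiv:2504.15889 — 5 statements merged into one kernel-verified Lean document; each statement's English description precedes it below -/
import Mathlib

section
/- Let $(V;\rho,\mu)$ be a representation of a Zinbiel algebra $(A,\circ_A)$. Then $(V^*; -\rho^*-\mu^*, \mu^*)$ is also a representation of $(A,\circ_A)$, where $\rho^*,\mu^*:A\to\mathrm{End}(V^*)$ are defined by $\langle\rho^*(x)\xi, v\rangle = -\langle\xi,\rho(x)v\rangle$ and $\langle\mu^*(x)\xi, v\rangle = -\langle\xi,\mu(x)v\rangle$. -/
/-- If `(V; ρ, μ)` is a representation of a Zinbiel algebra `(A, ∘)`, then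
`(V*; -ρ* - μ*, μ*)` is also a representation of `(A, ∘)`, where
`⟨ρ*(x)ξ, v⟩ = -⟨ξ, ρ(x)v⟩` and `⟨μ*(x)ξ, v⟩ = -⟨ξ, μ(x)v⟩`; equivalently,
`-ρ*(x) - μ*(x) = (ρ x).dualMap + (μ x).dualMap` and `μ*(x) = -(μ x).dualMap`. -/
theorem zinbiel_dual_representation {K : Type*} [Field K]
    {A : Type*} [AddCommGroup A] [Module K A]
    {V : Type*} [AddCommGroup V] [Module K V] [FiniteDimensional K V]
    (mul : A →ₗ[K] A →ₗ[K] A)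
    (hZ : ∀ x y z : A, mul x (mul y z) = mul (mul x y + mul y x) z)
    (ρ μ : A →ₗ[K] Module.End K V)
    (hrep1 : ∀ x y : A, ρ x * ρ y = ρ (mul x y) + ρ (mul y x))
    (hrep2 : ∀ x y : A, ρ x * μ y = μ (mul x y))
    (hrep3 : ∀ x y : A, μ (mul x y) = μ y * ρ x + μ y * μ x) :
    (∀ x y : A,
      ((ρ x).dualMap + (μ x).dualMap) * ((ρ y).dualMap + (μ y).dualMap)
        = ((ρ (mul x y)).dualMap + (μ (mul x y)).dualMap)
          + ((ρ (mul y x)).dualMap + (μ (mul y x)).dualMap)) ∧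
    (∀ x y : A,
      ((ρ x).dualMap + (μ x).dualMap) * (-(μ y).dualMap) = -(μ (mul x y)).dualMap) ∧
    (∀ x y : A,
      -(μ (mul x y)).dualMap
        = (-(μ y).dualMap) * ((ρ x).dualMap + (μ x).dualMap)
          + (-(μ y).dualMap) * (-(μ x).dualMap)) := by
  have p1 : ∀ x y : A, ∀ v : V, ρ x (ρ y v) = ρ (mul x y) v + ρ (mul y x) v := fun x y v => by
    have := congrArg (fun f : Module.End K V => f v) (hrep1 x y); simpa using this
  have p2 : ∀ x y : A, ∀ v : V, ρ x (μ y v) = μ (mul x y) v := fun x y v => by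
    have := congrArg (fun f : Module.End K V => f v) (hrep2 x y); simpa using this
  have p3 : ∀ x y : A, ∀ v : V, μ (mul x y) v = μ y (ρ x v) + μ y (μ x v) := fun x y v => by
    have := congrArg (fun f : Module.End K V => f v) (hrep3 x y); simpa using this
  refine ⟨fun x y => ?_, fun x y => ?_, fun x y => ?_⟩ <;>
  · ext ξ v
    simp only [Module.End.mul_apply, LinearMap.add_apply, LinearMap.neg_apply,
      LinearMap.dualMap_apply', LinearMap.coe_comp, Function.comp_apply, map_add, map_neg,
      p1, p2, p3]
    try abel
end

section
/- Let $(A,\circ_A)$ be a Zinbiel algebra. Then $A\oplus A^*$ with product $(x+\xi)\circ(y+\eta) = x\circ_A y + (-L_x^*-R_x^*)\eta + R_y^*\xi$ is a Zinbiel algebra, and the bilinear form $\omega(x+\xi, y+\eta) = \langle\xi,y\rangle - \langle\eta,x\rangle$ is nondegenerate, skew-symmetric, and satisfies the invariance condition $\omega(u\circ v, w) = \omega(v, u\circ w + w\circ u)$; moreover $A$ and $A^*$ are isotropic subalgebras. Hence $(A\ltimes A^*, A, A^*)$ is a Manin triple of Zinbiel algebras. -/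
/-- The Zinbiel product on `A ⊕ A*`:
`(x + ξ) ∘ (y + η) = x ∘ y + (-L_x* - R_x*)η + R_y* ξ`, where
`⟨L_x* ξ, y⟩ = -⟨ξ, x ∘ y⟩` and `⟨R_x* ξ, y⟩ = -⟨ξ, y ∘ x⟩`. -/
def zinbielDoubleMul {K : Type*} [Field K] {A : Type*} [AddCommGroup A] [Module K A]
    (mul : A →ₗ[K] A →ₗ[K] A) (p q : A × Module.Dual K A) : A × Module.Dual K A :=
  (mul p.1 q.1, q.2 ∘ₗ mul p.1 + q.2 ∘ₗ mul.flip p.1 - p.2 ∘ₗ mul.flip q.1)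

/-- The natural skew-symmetric bilinear form `ω(x + ξ, y + η) = ⟨ξ, y⟩ - ⟨η, x⟩` on `A ⊕ A*`. -/
def zinbielDoubleForm {K : Type*} [Field K] {A : Type*} [AddCommGroup A] [Module K A]
    (p q : A × Module.Dual K A) : K :=
  p.2 q.1 - q.2 p.1

/-!
`A ⋉ A*` is the semidirect product of `A` with the representation `(-L* - R*, R*)` on `A*`,
the dual of the regular bimodule. Evaluated at a point of `A`, the dual component of the
Zinbiel identity becomes a formal identity once every product `x ∘ (y ∘ z)` is expanded by the
Zinbiel identity of `A`. Nondegeneracy of `ω` holds because functionals separate points.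
-/

section ZinbielDouble

variable {K : Type*} [Field K] {A : Type*} [AddCommGroup A] [Module K A]

@[simp]
lemma zinbielDoubleMul_fst (mul : A →ₗ[K] A →ₗ[K] A) (p q : A × Module.Dual K A) :
    (zinbielDoubleMul mul p q).1 = mul p.1 q.1 := rfl

@[simp]
lemma zinbielDoubleMul_snd_apply (mul : A →ₗ[K] A →ₗ[K] A) (p q : A × Module.Dual K A)
    (a : A) :
    (zinbielDoubleMul mul p q).2 a = q.2 (mul p.1 a) + q.2 (mul a p.1) - p.2 (mul a q.1) := rfl

lemma zinbielDoubleMul_zinbiel (mul : A →ₗ[K] A →ₗ[K] A)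
    (hZ : ∀ x y z : A, mul x (mul y z) = mul (mul x y + mul y x) z)
    (p q w : A × Module.Dual K A) :
    zinbielDoubleMul mul p (zinbielDoubleMul mul q w)
      = zinbielDoubleMul mul (zinbielDoubleMul mul p q + zinbielDoubleMul mul q p) w := by
  refine Prod.ext (hZ p.1 q.1 w.1) (LinearMap.ext fun a => ?_)
  simp only [zinbielDoubleMul_fst, zinbielDoubleMul_snd_apply, Prod.fst_add, Prod.snd_add,
    LinearMap.add_apply, map_add, hZ]
  ring

lemma zinbielDoubleForm_swap (p q : A × Module.Dual K A) :
    zinbielDoubleForm p q = -zinbielDoubleForm q p := by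
  simp only [zinbielDoubleForm]
  ring

lemma eq_zero_of_forall_zinbielDoubleForm_eq_zero {p : A × Module.Dual K A}
    (h : ∀ q : A × Module.Dual K A, zinbielDoubleForm p q = 0) : p = 0 := by
  obtain ⟨x, ξ⟩ := p
  have hξ : ξ = 0 := LinearMap.ext fun y => by simpa [zinbielDoubleForm] using h (y, 0)
  have hx : x = 0 := (Module.forall_dual_apply_eq_zero_iff K x).1 fun η => by
    simpa [zinbielDoubleForm] using h (0, η)
  simp [hx, hξ]

lemma zinbielDoubleForm_mul_left (mul : A →ₗ[K] A →ₗ[K] A) (p q w : A × Module.Dual K A) :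
    zinbielDoubleForm (zinbielDoubleMul mul p q) w
      = zinbielDoubleForm q (zinbielDoubleMul mul p w + zinbielDoubleMul mul w p) := by
  simp only [zinbielDoubleForm, zinbielDoubleMul_fst, zinbielDoubleMul_snd_apply,
    Prod.fst_add, Prod.snd_add, LinearMap.add_apply, map_add]
  ring

end ZinbielDouble

theorem zinbiel_manin_triple_semidirect_general {K : Type*} [Field K] {A : Type*} [AddCommGroup A]
    [Module K A]
    (mul : A →ₗ[K] A →ₗ[K] A)
    (hZ : ∀ x y z : A, mul x (mul y z) = mul (mul x y + mul y x) z) :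
    (∀ p q w : A × Module.Dual K A,
      zinbielDoubleMul mul p (zinbielDoubleMul mul q w)
        = zinbielDoubleMul mul (zinbielDoubleMul mul p q + zinbielDoubleMul mul q p) w) ∧
    (∀ p q : A × Module.Dual K A, zinbielDoubleForm p q = -zinbielDoubleForm q p) ∧
    (∀ p : A × Module.Dual K A,
      (∀ q : A × Module.Dual K A, zinbielDoubleForm p q = 0) → p = 0) ∧
    (∀ p q w : A × Module.Dual K A,
      zinbielDoubleForm (zinbielDoubleMul mul p q) w
        = zinbielDoubleForm q (zinbielDoubleMul mul p w + zinbielDoubleMul mul w p)) ∧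
    (∀ x y : A, zinbielDoubleForm ((x, 0) : A × Module.Dual K A) (y, 0) = 0) ∧
    (∀ ξ η : Module.Dual K A, zinbielDoubleForm ((0, ξ) : A × Module.Dual K A) (0, η) = 0) ∧
    (∀ x y : A, (zinbielDoubleMul mul ((x, 0) : A × Module.Dual K A) (y, 0)).2 = 0) ∧
    (∀ ξ η : Module.Dual K A,
      (zinbielDoubleMul mul ((0, ξ) : A × Module.Dual K A) (0, η)).1 = 0) :=
  ⟨zinbielDoubleMul_zinbiel mul hZ,
    zinbielDoubleForm_swap,
    fun _ => eq_zero_of_forall_zinbielDoubleForm_eq_zero,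
    zinbielDoubleForm_mul_left mul,
    fun x y => by simp [zinbielDoubleForm],
    fun ξ η => by simp [zinbielDoubleForm],
    fun x y => LinearMap.ext fun a => by simp,
    fun ξ η => by simp⟩

/-- For a Zinbiel algebra `(A, ∘)`, the space `A ⊕ A*` with the product
`(x + ξ) ∘ (y + η) = x ∘ y + (-L_x* - R_x*)η + R_y* ξ` is a Zinbiel algebra; the bilinear
form `ω(x + ξ, y + η) = ⟨ξ, y⟩ - ⟨η, x⟩` is skew-symmetric, nondegenerate and invariant;
and `A`, `A*` are isotropic subalgebras. Hence `(A ⋉ A*, A, A*)` is a Manin triple of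
Zinbiel algebras. -/
theorem zinbiel_manin_triple_semidirect {K : Type*} [Field K] {A : Type*} [AddCommGroup A]
    [Module K A] [FiniteDimensional K A]
    (mul : A →ₗ[K] A →ₗ[K] A)
    (hZ : ∀ x y z : A, mul x (mul y z) = mul (mul x y + mul y x) z) :
    (∀ p q w : A × Module.Dual K A,
      zinbielDoubleMul mul p (zinbielDoubleMul mul q w)
        = zinbielDoubleMul mul (zinbielDoubleMul mul p q + zinbielDoubleMul mul q p) w) ∧
    (∀ p q : A × Module.Dual K A, zinbielDoubleForm p q = -zinbielDoubleForm q p) ∧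
    (∀ p : A × Module.Dual K A,
      (∀ q : A × Module.Dual K A, zinbielDoubleForm p q = 0) → p = 0) ∧
    (∀ p q w : A × Module.Dual K A,
      zinbielDoubleForm (zinbielDoubleMul mul p q) w
        = zinbielDoubleForm q (zinbielDoubleMul mul p w + zinbielDoubleMul mul w p)) ∧
    (∀ x y : A, zinbielDoubleForm ((x, 0) : A × Module.Dual K A) (y, 0) = 0) ∧
    (∀ ξ η : Module.Dual K A, zinbielDoubleForm ((0, ξ) : A × Module.Dual K A) (0, η) = 0) ∧
    (∀ x y : A, (zinbielDoubleMul mul ((x, 0) : A × Module.Dual K A) (y, 0)).2 = 0) ∧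
    (∀ ξ η : Module.Dual K A,
      (zinbielDoubleMul mul ((0, ξ) : A × Module.Dual K A) (0, η)).1 = 0) :=
  zinbiel_manin_triple_semidirect_general mul hZ
end

section
/- Let $(A,\circ_A)$ be a Zinbiel algebra and $r\in A\otimes A$ with skew-symmetric part $a$. If $a$ is $(L,L+R)$-invariant, i.e., $(L_x\otimes\mathrm{Id} - \mathrm{Id}\otimes(L_x+R_x))a = 0$ for all $x\in A$, then $(L_{x\circ_A y}\otimes\mathrm{Id} - \mathrm{Id}\otimes L_{x\circ_A y} - L_xL_y\otimes\mathrm{Id} + L_x\otimes L_y)(a) = 0$ for all $x,y\in A$. -/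
open scoped TensorProduct

/-!
Moving every left-leg operator to the right leg with the invariance `L_u ⊗ 1 = 1 ⊗ (L_u + R_u)`
on `a` turns the operator into `1 ⊗ (R_{x∘y} - R_y (L_x + R_x))`, and this right-leg operator
vanishes identically: it is the Zinbiel identity `z∘(x∘y) = (z∘x + x∘z)∘y`.
-/

namespace LinearMap

variable {R M N : Type*} [CommSemiring R] [AddCommMonoid M] [AddCommMonoid N]
  [Module R M] [Module R N] {a : M ⊗[R] N} {f : M →ₗ[R] M} {f' : N →ₗ[R] N}

theorem map_apply_eq_lTensor_comp (hf : f.rTensor N a = f'.lTensor M a) (h : N →ₗ[R] N) :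
    TensorProduct.map f h a = (h ∘ₗ f').lTensor M a := by
  rw [← lTensor_comp_rTensor, comp_apply, hf, lTensor_comp_apply]

theorem rTensor_comp_apply_eq_lTensor_comp {g : M →ₗ[R] M} {g' : N →ₗ[R] N}
    (hf : f.rTensor N a = f'.lTensor M a) (hg : g.rTensor N a = g'.lTensor M a) :
    (f ∘ₗ g).rTensor N a = (g' ∘ₗ f').lTensor M a := by
  rw [rTensor_comp_apply, hg, ← comp_apply (f.rTensor N), rTensor_comp_lTensor,
    map_apply_eq_lTensor_comp hf]

end LinearMap

theorem flip_mul_eq_flip_comp_of_zinbiel {R A : Type*} [CommSemiring R] [AddCommMonoid A]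
    [Module R A] {mul : A →ₗ[R] A →ₗ[R] A}
    (hZ : ∀ x y z : A, mul x (mul y z) = mul (mul x y + mul y x) z) (x y : A) :
    mul.flip (mul x y) = mul.flip y ∘ₗ (mul x + mul.flip x) := by
  ext z
  simp [hZ z x y, add_comm]

theorem invariant_skew_part_identity_general {K : Type*} [Field K] {A : Type*} [AddCommGroup A]
    [Module K A] (mul : A →ₗ[K] A →ₗ[K] A)
    (hZ : ∀ x y z : A, mul x (mul y z) = mul (mul x y + mul y x) z)
    (a : A ⊗[K] A)
    (hinv : ∀ x : A,
      (TensorProduct.map (mul x) (LinearMap.id : A →ₗ[K] A)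
        - TensorProduct.map (LinearMap.id : A →ₗ[K] A) (mul x + mul.flip x)) a = 0) :
    ∀ x y : A,
      (TensorProduct.map (mul (mul x y)) (LinearMap.id : A →ₗ[K] A)
        - TensorProduct.map (LinearMap.id : A →ₗ[K] A) (mul (mul x y))
        - TensorProduct.map ((mul x) ∘ₗ (mul y)) (LinearMap.id : A →ₗ[K] A)
        + TensorProduct.map (mul x) (mul y)) a = 0 := by
  intro x y
  have hL (u : A) : (mul u).rTensor A a = (mul u + mul.flip u).lTensor A a :=
    sub_eq_zero.mp (hinv u)
  have hR := congrArg (fun g : A →ₗ[K] A => g.lTensor A a)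
    (flip_mul_eq_flip_comp_of_zinbiel hZ x y)
  simp only [LinearMap.sub_apply, LinearMap.add_apply, ← LinearMap.rTensor_def,
    ← LinearMap.lTensor_def, hL, LinearMap.rTensor_comp_apply_eq_lTensor_comp (hL x) (hL y),
    LinearMap.map_apply_eq_lTensor_comp (hL x), LinearMap.add_comp, LinearMap.lTensor_add,
    LinearMap.add_apply] at hR ⊢
  rw [hR]
  abel

/-- Let `(A, ∘)` be a Zinbiel algebra and `r ∈ A ⊗ A` with skew-symmetric part `a`.
If `a` is `(L, L+R)`-invariant, i.e., `(L_x ⊗ Id - Id ⊗ (L_x + R_x)) a = 0` for all `x`,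
then `(L_{x∘y} ⊗ Id - Id ⊗ L_{x∘y} - L_x L_y ⊗ Id + L_x ⊗ L_y)(a) = 0` for all `x, y`. -/
theorem invariant_skew_part_identity {K : Type*} [Field K] {A : Type*} [AddCommGroup A]
    [Module K A] (mul : A →ₗ[K] A →ₗ[K] A)
    (hZ : ∀ x y z : A, mul x (mul y z) = mul (mul x y + mul y x) z)
    (r a : A ⊗[K] A)
    (ha : a = (2 : K)⁻¹ • (r - TensorProduct.comm K A A r))
    (hinv : ∀ x : A,
      (TensorProduct.map (mul x) (LinearMap.id : A →ₗ[K] A)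
        - TensorProduct.map (LinearMap.id : A →ₗ[K] A) (mul x + mul.flip x)) a = 0) :
    ∀ x y : A,
      (TensorProduct.map (mul (mul x y)) (LinearMap.id : A →ₗ[K] A)
        - TensorProduct.map (LinearMap.id : A →ₗ[K] A) (mul (mul x y))
        - TensorProduct.map ((mul x) ∘ₗ (mul y)) (LinearMap.id : A →ₗ[K] A)
        + TensorProduct.map (mul x) (mul y)) a = 0 :=
  invariant_skew_part_identity_general mul hZ a hinv
end

section
/- Let $(A,*_A,\omega)$ be a commutative associative algebra with a nondegenerate Connes cocycle $\omega$, and define $\circ_A$ by $\omega(x\circ_A y, z) = \omega(y, x*_A z)$. Then $(A,\circ_A)$ is a Zinbiel algebra whose sub-adjacent commutative associative algebra is $(A,*_A)$, and $(A,\circ_A,\omega)$ is a quadratic Zinbiel algebra. -/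
/-!
Nondegeneracy of `ω` lets us compare elements through `w ↦ ω(·, w)`. Against a test vector `w`,
`x ∘ y + y ∘ x` pairs to `ω(y, x * w) + ω(x, y * w)`, which the cocycle identity turns into
`ω(x * y, w)`; and `x ∘ (y ∘ z)` pairs to `ω(z, y * (x * w)) = ω(z, (x * y) * w)`, i.e. to
`(x * y) ∘ z`. Substituting the first identity into the second and into the defining relation
of `∘` gives the Zinbiel identity and the invariance of `ω`.
-/

section ConnesCocycle

variable {K A : Type*} [CommRing K] [AddCommGroup A] [Module K A]
  {smul circ : A →ₗ[K] A →ₗ[K] A} {ω : A →ₗ[K] A →ₗ[K] K}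

theorem eq_of_forall_form_apply_eq (hnd : ∀ x : A, (∀ y : A, ω x y = 0) → x = 0) {a b : A}
    (h : ∀ w : A, ω a w = ω b w) : a = b :=
  sub_eq_zero.mp <| hnd _ fun w => by simp [h w]

theorem circ_add_circ_swap_eq_smul (hcomm : ∀ x y : A, smul x y = smul y x)
    (hskew : ∀ x y : A, ω x y = -ω y x) (hnd : ∀ x : A, (∀ y : A, ω x y = 0) → x = 0)
    (hcc : ∀ x y z : A, ω (smul x y) z + ω (smul y z) x + ω (smul z x) y = 0)
    (hdef : ∀ x y z : A, ω (circ x y) z = ω y (smul x z)) (x y : A) :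
    circ x y + circ y x = smul x y := by
  refine eq_of_forall_form_apply_eq hnd fun w => ?_
  have hcocycle := hcc x y w
  rw [hcomm w x] at hcocycle
  rw [map_add, LinearMap.add_apply, hdef, hdef]
  linear_combination -hcocycle + hskew (smul y w) x + hskew (smul x w) y

theorem circ_circ_eq_circ_smul (hcomm : ∀ x y : A, smul x y = smul y x)
    (hassoc : ∀ x y z : A, smul (smul x y) z = smul x (smul y z))
    (hnd : ∀ x : A, (∀ y : A, ω x y = 0) → x = 0)
    (hdef : ∀ x y z : A, ω (circ x y) z = ω y (smul x z)) (x y z : A) :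
    circ x (circ y z) = circ (smul x y) z :=
  eq_of_forall_form_apply_eq hnd fun w => by
    rw [hdef, hdef, hdef, hassoc, ← hassoc y, hcomm y x, hassoc]

end ConnesCocycle

/-- Let `(A, *, ω)` be a commutative associative algebra with a nondegenerate Connes
cocycle `ω`, and let `∘` be defined by `ω(x ∘ y, z) = ω(y, x * z)`.  Then `(A, ∘)` is a
Zinbiel algebra whose sub-adjacent commutative associative algebra is `(A, *)`, and
`(A, ∘, ω)` is a quadratic Zinbiel algebra. -/
theorem connes_cocycle_to_quadratic_zinbiel {K : Type*} [Field K] {A : Type*}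
    [AddCommGroup A] [Module K A]
    (smul : A →ₗ[K] A →ₗ[K] A)
    (hcomm : ∀ x y : A, smul x y = smul y x)
    (hassoc : ∀ x y z : A, smul (smul x y) z = smul x (smul y z))
    (ω : A →ₗ[K] A →ₗ[K] K)
    (hskew : ∀ x y : A, ω x y = -ω y x)
    (hnd : ∀ x : A, (∀ y : A, ω x y = 0) → x = 0)
    (hcc : ∀ x y z : A, ω (smul x y) z + ω (smul y z) x + ω (smul z x) y = 0)
    (circ : A →ₗ[K] A →ₗ[K] A)
    (hdef : ∀ x y z : A, ω (circ x y) z = ω y (smul x z)) :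
    (∀ x y z : A, circ x (circ y z) = circ (circ x y + circ y x) z) ∧
    (∀ x y : A, circ x y + circ y x = smul x y) ∧
    (∀ x y z : A, ω (circ x y) z = ω y (circ x z + circ z x)) := by
  have hsub := circ_add_circ_swap_eq_smul hcomm hskew hnd hcc hdef
  refine ⟨fun x y z => ?_, hsub, fun x y z => ?_⟩
  · rw [hsub, circ_circ_eq_circ_smul hcomm hassoc hnd hdef]
  · rw [hdef, hsub]
end

section
/- Let $(A,\circ_A,\frak{B},\omega)$ be a quadratic commutative associative algebra $(A,*_A,\frak{B})$ equipped with a nondegenerate Connes cocycle $\omega$, and define $D:A\to A$ by $\omega(x,y)=\frak{B}(Dx,y)$. Then $D$ is a skew-symmetric (with respect to $\frak{B}$) invertible derivation of $(A,*_A)$, and its inverse $P=D^{-1}$ is a Rota-Baxter operator of weight $0$ on $(A,*_A)$. -/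
/-!
The Connes cocycle identity, rewritten through `ω(x, y) = 𝔅(Dx, y)`, skew-symmetry of `ω` and
invariance of `𝔅`, says exactly `𝔅(D(xy) - Dx·y - x·Dy, z) = 0`; nondegeneracy of `𝔅` gives Leibniz.
Skew-symmetry of `D` is that of `ω`, and nondegeneracy of `ω` makes `D` injective, hence bijective
in finite dimension. Applying `P = D⁻¹` to the Leibniz rule for `Px · Py` gives the Rota-Baxter
identity of weight `0`.
-/

namespace ConnesCocycle

variable {K A : Type*} [Field K] [AddCommGroup A] [Module K A]

def IsDerivation (mul : A →ₗ[K] A →ₗ[K] A) (D : A →ₗ[K] A) : Prop :=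
  ∀ x y : A, D (mul x y) = mul (D x) y + mul x (D y)

def IsRotaBaxter (mul : A →ₗ[K] A →ₗ[K] A) (P : A →ₗ[K] A) : Prop :=
  ∀ x y : A, mul (P x) (P y) = P (mul (P x) y + mul x (P y))

variable {mul : A →ₗ[K] A →ₗ[K] A} {B ω : A →ₗ[K] A →ₗ[K] K} {D : A →ₗ[K] A}

theorem isDerivation_of_connesCocycle (hcomm : ∀ x y : A, mul x y = mul y x)
    (hBnd : ∀ x : A, (∀ y : A, B x y = 0) → x = 0)
    (hBinv : ∀ x y z : A, B (mul x y) z = B x (mul y z))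
    (hskew : ∀ x y : A, ω x y = -ω y x)
    (hcc : ∀ x y z : A, ω (mul x y) z + ω (mul y z) x + ω (mul z x) y = 0)
    (hD : ∀ x y : A, ω x y = B (D x) y) :
    IsDerivation mul D := by
  intro x y
  rw [← sub_eq_zero]
  refine hBnd _ fun z => ?_
  have hleibniz : B (D (mul x y)) z = B (mul (D x) y + mul x (D y)) z :=
    calc B (D (mul x y)) z
        = -ω (mul y z) x - ω (mul z x) y := by rw [← hD]; linear_combination hcc x y z
      _ = B (D x) (mul y z) + B (D y) (mul z x) := by
          rw [← hD, ← hD, hskew x, hskew y, sub_eq_add_neg]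
      _ = B (mul (D x) y + mul x (D y)) z := by
          rw [map_add, LinearMap.add_apply, hBinv, hcomm x, hBinv, hcomm z]
  rw [map_sub, LinearMap.sub_apply, hleibniz, sub_self]

theorem skewAdjoint_of_symm_of_skew (hBsymm : ∀ x y : A, B x y = B y x)
    (hskew : ∀ x y : A, ω x y = -ω y x) (hD : ∀ x y : A, ω x y = B (D x) y) (x y : A) :
    B (D x) y = -B x (D y) := by
  rw [← hD, hskew, hD, hBsymm]

theorem bijective_of_nondegenerate [FiniteDimensional K A]
    (hnd : ∀ x : A, (∀ y : A, ω x y = 0) → x = 0) (hD : ∀ x y : A, ω x y = B (D x) y) :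
    Function.Bijective D := by
  have hinj : Function.Injective D := by
    refine (injective_iff_map_eq_zero D).mpr fun x hx => hnd x fun y => ?_
    rw [hD, hx, map_zero, LinearMap.zero_apply]
  exact ⟨hinj, LinearMap.injective_iff_surjective.mp hinj⟩

theorem IsDerivation.isRotaBaxter_of_inverse {P : A →ₗ[K] A} (hder : IsDerivation mul D)
    (hPD : ∀ x : A, P (D x) = x) (hDP : ∀ x : A, D (P x) = x) :
    IsRotaBaxter mul P := by
  intro x y
  calc mul (P x) (P y) = P (D (mul (P x) (P y))) := (hPD _).symm
    _ = P (mul (P x) y + mul x (P y)) := by rw [hder, hDP, hDP, add_comm]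

end ConnesCocycle

open ConnesCocycle in
theorem connes_cocycle_derivation_rb_general {K : Type*} [Field K] {A : Type*}
    [AddCommGroup A] [Module K A] [FiniteDimensional K A]
    (smul : A →ₗ[K] A →ₗ[K] A)
    (hcomm : ∀ x y : A, smul x y = smul y x)
    (B : A →ₗ[K] A →ₗ[K] K)
    (hBsymm : ∀ x y : A, B x y = B y x)
    (hBnd : ∀ x : A, (∀ y : A, B x y = 0) → x = 0)
    (hBinv : ∀ x y z : A, B (smul x y) z = B x (smul y z))
    (ω : A →ₗ[K] A →ₗ[K] K)
    (hskew : ∀ x y : A, ω x y = -ω y x)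
    (hnd : ∀ x : A, (∀ y : A, ω x y = 0) → x = 0)
    (hcc : ∀ x y z : A, ω (smul x y) z + ω (smul y z) x + ω (smul z x) y = 0)
    (D : A →ₗ[K] A)
    (hD : ∀ x y : A, ω x y = B (D x) y) :
    (∀ x y : A, D (smul x y) = smul (D x) y + smul x (D y)) ∧
    (∀ x y : A, B (D x) y = -B x (D y)) ∧
    Function.Bijective D ∧
    (∀ P : A →ₗ[K] A, (∀ x : A, P (D x) = x) → (∀ x : A, D (P x) = x) →
      ∀ x y : A, smul (P x) (P y) = P (smul (P x) y + smul x (P y))) := by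
  have hder : IsDerivation smul D := isDerivation_of_connesCocycle hcomm hBnd hBinv hskew hcc hD
  exact ⟨hder, skewAdjoint_of_symm_of_skew hBsymm hskew hD, bijective_of_nondegenerate hnd hD,
    fun _ hPD hDP => hder.isRotaBaxter_of_inverse hPD hDP⟩

/-- Let `(A, *, 𝔅)` be a quadratic commutative associative algebra equipped with a
nondegenerate Connes cocycle `ω`, and define `D : A → A` by `ω(x, y) = 𝔅(Dx, y)`.  Then
`D` is a skew-symmetric (with respect to `𝔅`) invertible derivation of `(A, *)` and its
inverse `P = D⁻¹` is a Rota-Baxter operator of weight `0` on `(A, *)`. -/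
theorem connes_cocycle_derivation_rb {K : Type*} [Field K] {A : Type*}
    [AddCommGroup A] [Module K A] [FiniteDimensional K A]
    (smul : A →ₗ[K] A →ₗ[K] A)
    (hcomm : ∀ x y : A, smul x y = smul y x)
    (hassoc : ∀ x y z : A, smul (smul x y) z = smul x (smul y z))
    (B : A →ₗ[K] A →ₗ[K] K)
    (hBsymm : ∀ x y : A, B x y = B y x)
    (hBnd : ∀ x : A, (∀ y : A, B x y = 0) → x = 0)
    (hBinv : ∀ x y z : A, B (smul x y) z = B x (smul y z))
    (ω : A →ₗ[K] A →ₗ[K] K)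
    (hskew : ∀ x y : A, ω x y = -ω y x)
    (hnd : ∀ x : A, (∀ y : A, ω x y = 0) → x = 0)
    (hcc : ∀ x y z : A, ω (smul x y) z + ω (smul y z) x + ω (smul z x) y = 0)
    (D : A →ₗ[K] A)
    (hD : ∀ x y : A, ω x y = B (D x) y) :
    (∀ x y : A, D (smul x y) = smul (D x) y + smul x (D y)) ∧
    (∀ x y : A, B (D x) y = -B x (D y)) ∧
    Function.Bijective D ∧
    (∀ P : A →ₗ[K] A, (∀ x : A, P (D x) = x) → (∀ x : A, D (P x) = x) →
      ∀ x y : A, smul (P x) (P y) = P (smul (P x) y + smul x (P y))) :=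
  connes_cocycle_derivation_rb_general smul hcomm B hBsymm hBnd hBinv ω hskew hnd hcc D hD
end
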